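/- arXiv:2411.08321 — 4 statements merged into one kernel-verified Lean document; each statement's English description precedes it below -/
import Mathlib

section
/- Let p be an odd prime and a, c integers with p not dividing c. Then for each sign ε ∈ {1, −1}, there are no p-adic numbers w, z ∈ ℚ_p satisfying ε·p·w² = p² + p·a·z² + c·z⁴. -/
variable {p : ℕ} [Fact p.Prime]

lemma padic_val_pow (x : ℚ_[p]) (hx : x ≠ 0) (n : ℕ) :
    (x ^ n).valuation = n * x.valuation := by
  induction n with
  | zero => simp [Padic.valuation_one]
  | succ n ih =>
    rw [pow_succ, Padic.valuation_mul (pow_ne_zero _ hx) hx, ih]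
    push_cast; ring

lemma padic_norm_lt_of_val_lt {x y : ℚ_[p]} (hx : x ≠ 0) (hy : y ≠ 0)
    (h : x.valuation < y.valuation) : ‖y‖ < ‖x‖ := by
  rw [Padic.norm_eq_zpow_neg_valuation hx, Padic.norm_eq_zpow_neg_valuation hy]
  have hp : (1:ℝ) < p := by exact_mod_cast (Fact.out : p.Prime).one_lt
  exact zpow_lt_zpow_right₀ hp (by omega)

/-- If `y = 0` or `v x < v y`, then `x + y ≠ 0` and has the valuation of `x`. -/
lemma padic_val_add {x y : ℚ_[p]} (hx : x ≠ 0)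
    (h : y = 0 ∨ (y ≠ 0 ∧ x.valuation < y.valuation)) :
    x + y ≠ 0 ∧ (x + y).valuation = x.valuation := by
  rcases h with rfl | ⟨hy, hlt⟩
  · simp [hx]
  have hnorm : ‖y‖ < ‖x‖ := padic_norm_lt_of_val_lt hx hy hlt
  have hne : ‖x‖ ≠ ‖y‖ := ne_of_gt hnorm
  have hmax : ‖x + y‖ = max ‖x‖ ‖y‖ := Padic.add_eq_max_of_ne hne
  have hxy : x + y ≠ 0 := by
    intro h0
    rw [h0, norm_zero, max_eq_left hnorm.le] at hmax
    exact hx (norm_eq_zero.mp hmax.symm)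
  refine ⟨hxy, ?_⟩
  have : ‖x + y‖ = ‖x‖ := by rw [hmax, max_eq_left hnorm.le]
  rw [Padic.norm_eq_zpow_neg_valuation hxy, Padic.norm_eq_zpow_neg_valuation hx] at this
  have hp : (1:ℝ) < p := by exact_mod_cast (Fact.out : p.Prime).one_lt
  have := zpow_right_injective₀ (by positivity) (ne_of_gt hp) this
  omega

theorem stmt_13 (p : ℕ) [Fact p.Prime] (hodd : p ≠ 2) (a c : ℤ)
    (hc : ¬ (p : ℤ) ∣ c) (ε : ℤ) (hε : ε = 1 ∨ ε = -1) :
    ¬ ∃ w z : ℚ_[p],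
      (ε : ℚ_[p]) * (p : ℚ_[p]) * w ^ 2 =
        (p : ℚ_[p]) ^ 2 + (p : ℚ_[p]) * (a : ℚ_[p]) * z ^ 2 + (c : ℚ_[p]) * z ^ 4 := by
  rintro ⟨w, z, heq⟩
  have hpprime : p.Prime := Fact.out
  have hp0 : (p : ℚ_[p]) ≠ 0 := Nat.cast_ne_zero.mpr hpprime.ne_zero
  have hcz : c ≠ 0 := by rintro rfl; exact hc (dvd_zero _)
  have hcQ : (c : ℚ_[p]) ≠ 0 := Int.cast_ne_zero.mpr hcz
  have hvp : (p : ℚ_[p]).valuation = 1 := Padic.valuation_p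
  have hvc : (c : ℚ_[p]).valuation = 0 := by
    rw [Padic.valuation_intCast, padicValInt.eq_zero_of_not_dvd hc]; rfl
  have hA : ((p : ℚ_[p]) ^ 2) ≠ 0 := pow_ne_zero _ hp0
  have hvA : ((p : ℚ_[p]) ^ 2).valuation = 2 := by
    rw [padic_val_pow _ hp0, hvp]; ring
  -- the right-hand side is nonzero with even valuation
  have hR : ((p : ℚ_[p]) ^ 2 + (p : ℚ_[p]) * (a : ℚ_[p]) * z ^ 2 + (c : ℚ_[p]) * z ^ 4) ≠ 0 ∧
      ∃ k : ℤ, ((p : ℚ_[p]) ^ 2 + (p : ℚ_[p]) * (a : ℚ_[p]) * z ^ 2 +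
        (c : ℚ_[p]) * z ^ 4).valuation = 2 * k := by
    rcases eq_or_ne z 0 with rfl | hz
    · constructor
      · simpa using hA
      · refine ⟨1, ?_⟩; simpa using hvA
    · set j := z.valuation with hj
      have hz2 : z ^ 2 ≠ 0 := pow_ne_zero _ hz
      have hz4 : z ^ 4 ≠ 0 := pow_ne_zero _ hz
      have hC : (c : ℚ_[p]) * z ^ 4 ≠ 0 := mul_ne_zero hcQ hz4
      have hvC : ((c : ℚ_[p]) * z ^ 4).valuation = 4 * j := by
        rw [Padic.valuation_mul hcQ hz4, hvc, padic_val_pow _ hz]; push_cast; ring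
      -- valuation of the middle term when a ≠ 0
      have hvB : ∀ _ : a ≠ 0, ((p : ℚ_[p]) * (a : ℚ_[p]) * z ^ 2) ≠ 0 ∧
          ∃ va : ℤ, 0 ≤ va ∧
            ((p : ℚ_[p]) * (a : ℚ_[p]) * z ^ 2).valuation = 1 + va + 2 * j := by
        intro ha
        have haQ : (a : ℚ_[p]) ≠ 0 := Int.cast_ne_zero.mpr ha
        have hB : (p : ℚ_[p]) * (a : ℚ_[p]) * z ^ 2 ≠ 0 :=
          mul_ne_zero (mul_ne_zero hp0 haQ) hz2
        refine ⟨hB, (a : ℚ_[p]).valuation, ?_, ?_⟩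
        · rw [Padic.valuation_intCast]; exact Int.natCast_nonneg _
        · rw [Padic.valuation_mul (mul_ne_zero hp0 haQ) hz2,
            Padic.valuation_mul hp0 haQ, hvp, padic_val_pow _ hz]
          push_cast; ring
      rcases le_or_gt j 0 with hj0 | hj0
      · -- leading term is c z⁴, valuation 4j
        have key : (p : ℚ_[p]) ^ 2 + (p : ℚ_[p]) * (a : ℚ_[p]) * z ^ 2 = 0 ∨
            (((p : ℚ_[p]) ^ 2 + (p : ℚ_[p]) * (a : ℚ_[p]) * z ^ 2) ≠ 0 ∧
              ((c : ℚ_[p]) * z ^ 4).valuation <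
              ((p : ℚ_[p]) ^ 2 + (p : ℚ_[p]) * (a : ℚ_[p]) * z ^ 2).valuation) := by
          rcases eq_or_ne ((p : ℚ_[p]) ^ 2 + (p : ℚ_[p]) * (a : ℚ_[p]) * z ^ 2) 0 with
            h0 | h0
          · exact Or.inl h0
          refine Or.inr ⟨h0, ?_⟩
          have hmin := Padic.le_valuation_add h0
          rcases eq_or_ne a 0 with rfl | ha
          · simp only [Int.cast_zero, mul_zero, zero_mul, add_zero] at h0 ⊢
            rw [hvA, hvC]; omega
          · obtain ⟨hB, va, hva0, hvB'⟩ := hvB ha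
            rw [hvA, hvB'] at hmin
            rw [hvC]
            have : min (2 : ℤ) (1 + va + 2 * j) ≤ _ := hmin
            omega
        obtain ⟨hne, hval⟩ := padic_val_add hC key
        have hcomm : (p : ℚ_[p]) ^ 2 + (p : ℚ_[p]) * (a : ℚ_[p]) * z ^ 2 +
            (c : ℚ_[p]) * z ^ 4 = (c : ℚ_[p]) * z ^ 4 +
            ((p : ℚ_[p]) ^ 2 + (p : ℚ_[p]) * (a : ℚ_[p]) * z ^ 2) := by ring
        rw [hcomm]
        exact ⟨hne, ⟨2 * j, by rw [hval, hvC]; ring⟩⟩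
      · -- leading term is p², valuation 2
        have key : (p : ℚ_[p]) * (a : ℚ_[p]) * z ^ 2 + (c : ℚ_[p]) * z ^ 4 = 0 ∨
            (((p : ℚ_[p]) * (a : ℚ_[p]) * z ^ 2 + (c : ℚ_[p]) * z ^ 4) ≠ 0 ∧
              ((p : ℚ_[p]) ^ 2).valuation <
              ((p : ℚ_[p]) * (a : ℚ_[p]) * z ^ 2 + (c : ℚ_[p]) * z ^ 4).valuation) := by
          rcases eq_or_ne ((p : ℚ_[p]) * (a : ℚ_[p]) * z ^ 2 + (c : ℚ_[p]) * z ^ 4) 0 with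
            h0 | h0
          · exact Or.inl h0
          refine Or.inr ⟨h0, ?_⟩
          have hmin := Padic.le_valuation_add h0
          rw [hvA]
          rcases eq_or_ne a 0 with rfl | ha
          · simp only [Int.cast_zero, mul_zero, zero_mul, zero_add] at h0 ⊢
            rw [hvC]; omega
          · obtain ⟨hB, va, hva0, hvB'⟩ := hvB ha
            rw [hvB', hvC] at hmin
            have : min (1 + va + 2 * j) (4 * j) ≤ _ := hmin
            omega
        obtain ⟨hne, hval⟩ := padic_val_add hA key
        rw [add_assoc]
        exact ⟨hne, ⟨1, by rw [hval, hvA]; ring⟩⟩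
  obtain ⟨hRne, k, hRval⟩ := hR
  -- left-hand side
  have hεQ : (ε : ℚ_[p]) = 1 ∨ (ε : ℚ_[p]) = -1 := by
    rcases hε with rfl | rfl <;> simp
  have hw : w ≠ 0 := by
    rintro rfl
    rw [← heq] at hRne
    simp at hRne
  have hvL : ((ε : ℚ_[p]) * (p : ℚ_[p]) * w ^ 2).valuation = 1 + 2 * w.valuation := by
    have hεne : (ε : ℚ_[p]) ≠ 0 := by rcases hεQ with h | h <;> rw [h] <;> norm_num
    have hvε : (ε : ℚ_[p]).valuation = 0 := by
      rcases hεQ with h | h <;> rw [h]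
      · exact Padic.valuation_one
      · rw [show ((-1 : ℚ_[p])) = ((-1 : ℤ) : ℚ_[p]) by norm_num,
          Padic.valuation_intCast]
        simp [padicValInt]
    rw [Padic.valuation_mul (mul_ne_zero hεne hp0) (pow_ne_zero _ hw),
      Padic.valuation_mul hεne hp0, hvε, hvp, padic_val_pow _ hw]
    push_cast; ring
  rw [heq, hRval] at hvL
  omega
end

section
/- Let a, c be integers with 4 ∣ a and c odd. Then there are no 2-adic numbers w, z ∈ ℚ_2 satisfying −w² = 1 + 2a·z² + 8c·z⁴. -/
/-!
If `‖z‖ ≤ 1`, then `w` is a `2`-adic integer too and the equation reads `-w² ≡ 1 (mod 4)`,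
impossible since squares are `0` or `1` mod `4`. If `‖z‖ > 1`, write `z⁻¹ = 2v` with `v ∈ ℤ₂`;
multiplying by `z⁻⁴` gives `-(w z⁻²)² = 8 + 16 (v⁴ + 2bv² + d)` where `a = 4b`, `c = 2d + 1`,
so `-W² ≡ 8 (mod 16)` for the `2`-adic integer `W = w z⁻²`, impossible since squares are
`0, 1, 4, 9` mod `16`.
-/

namespace PadicInt

variable {p : ℕ} [Fact p.Prime]

@[simp, norm_cast]
theorem coe_ofNat (n : ℕ) [n.AtLeastTwo] :
    ((no_index (OfNat.ofNat n) : ℤ_[p]) : ℚ_[p]) = OfNat.ofNat n :=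
  rfl

theorem toZModPow_eq_zero_of_dvd {n : ℕ} {x : ℤ_[p]} (h : (p : ℤ_[p]) ^ n ∣ x) :
    toZModPow n x = 0 := by
  rw [← RingHom.mem_ker, ker_toZModPow]
  exact Ideal.mem_span_singleton.mpr h

theorem not_four_dvd_sq_add_one (x : ℤ_[2]) : ¬ (4 : ℤ_[2]) ∣ x ^ 2 + 1 := by
  intro h
  have hx := toZModPow_eq_zero_of_dvd (n := 2) h
  rw [map_add, map_pow, map_one] at hx
  revert hx
  generalize toZModPow 2 x = y
  revert y
  decide

theorem not_sixteen_dvd_sq_add_eight (x : ℤ_[2]) : ¬ (16 : ℤ_[2]) ∣ x ^ 2 + 8 := by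
  intro h
  have hx := toZModPow_eq_zero_of_dvd (n := 4) h
  rw [map_add, map_pow, map_ofNat] at hx
  revert hx
  generalize toZModPow 4 x = y
  revert y
  decide

end PadicInt

namespace Padic

variable {p : ℕ} [Fact p.Prime]

theorem exists_coe_eq_of_pow_eq_coe {n : ℕ} (hn : n ≠ 0) {x : ℚ_[p]} {y : ℤ_[p]}
    (h : x ^ n = y) : ∃ x' : ℤ_[p], (x' : ℚ_[p]) = x := by
  have hx : ‖x‖ ^ n ≤ 1 := by rw [← norm_pow, h]; exact y.norm_le_one
  exact ⟨⟨x, (pow_le_one_iff_of_nonneg (norm_nonneg x) hn).mp hx⟩, rfl⟩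

theorem exists_eq_p_mul_of_norm_lt_one {x : ℚ_[p]} (hx : ‖x‖ < 1) :
    ∃ y : ℤ_[p], x = p * y := by
  obtain ⟨y, hy⟩ := (PadicInt.norm_lt_one_iff_dvd ⟨x, hx.le⟩).mp hx
  exact ⟨y, by simpa using congrArg ((↑) : ℤ_[p] → ℚ_[p]) hy⟩

theorem neg_sq_ne_one_add_four_mul (w : ℚ_[2]) (y : ℤ_[2]) : -w ^ 2 ≠ 1 + 4 * (y : ℚ_[2]) := by
  intro h
  obtain ⟨W, rfl⟩ := exists_coe_eq_of_pow_eq_coe two_ne_zero (y := -(1 + 4 * y))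
    (by push_cast; linear_combination -h)
  refine W.not_four_dvd_sq_add_one ⟨-y, Subtype.ext ?_⟩
  push_cast
  linear_combination -h

theorem neg_sq_ne_eight_add_sixteen_mul (w : ℚ_[2]) (y : ℤ_[2]) :
    -w ^ 2 ≠ 8 + 16 * (y : ℚ_[2]) := by
  intro h
  obtain ⟨W, rfl⟩ := exists_coe_eq_of_pow_eq_coe two_ne_zero (y := -(8 + 16 * y))
    (by push_cast; linear_combination -h)
  refine W.not_sixteen_dvd_sq_add_eight ⟨-y, Subtype.ext ?_⟩
  push_cast
  linear_combination -h

end Padic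

theorem stmt_14 (a c : ℤ) (ha : 4 ∣ a) (hc : Odd c) :
    ¬ ∃ w z : ℚ_[2],
      -w ^ 2 = 1 + 2 * (a : ℚ_[2]) * z ^ 2 + 8 * (c : ℚ_[2]) * z ^ 4 := by
  rintro ⟨w, z, h⟩
  obtain ⟨b, rfl⟩ := ha
  obtain ⟨d, rfl⟩ := hc
  push_cast at h
  rcases le_or_gt ‖z‖ 1 with hz | hz
  · set Z : ℤ_[2] := ⟨z, hz⟩
    apply Padic.neg_sq_ne_one_add_four_mul w (2 * b * Z ^ 2 + 2 * (2 * d + 1) * Z ^ 4)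
    push_cast
    linear_combination h
  · have hu : ‖z⁻¹‖ < 1 := by rw [norm_inv]; exact inv_lt_one_of_one_lt₀ hz
    obtain ⟨v, hv⟩ := Padic.exists_eq_p_mul_of_norm_lt_one hu
    push_cast at hv
    have hzv : z * (2 * v) = 1 := by
      rw [← hv]; exact mul_inv_cancel₀ (norm_pos_iff.mp (one_pos.trans hz))
    apply Padic.neg_sq_ne_eight_add_sixteen_mul (w * (2 * v) ^ 2) (v ^ 4 + 2 * b * v ^ 2 + d)
    push_cast
    linear_combination (2 * v : ℚ_[2]) ^ 4 * h + 8 * (z * (2 * v) + 1) *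
      (b * (2 * v) ^ 2 + (2 * d + 1) * (z ^ 2 * (2 * v) ^ 2 + 1)) * hzv
end

section
/- Let p be an odd prime with p ≢ 1 (mod 8), let a be an integer divisible by 4, and let c be an odd integer. Then there are no 2-adic numbers w, z ∈ ℚ_2 satisfying p·w² = p² + 2p·a·z² + 8c·z⁴. -/
theorem stmt_15 (p : ℕ) (hp : p.Prime) (hodd : Odd p) (hmod : p % 8 ≠ 1)
    (a c : ℤ) (ha : 4 ∣ a) (hc : Odd c) :
    ¬ ∃ w z : ℚ_[2],
      (p : ℚ_[2]) * w ^ 2 =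
        (p : ℚ_[2]) ^ 2 + 2 * (p : ℚ_[2]) * (a : ℚ_[2]) * z ^ 2 + 8 * (c : ℚ_[2]) * z ^ 4 := by
  rintro ⟨w, z, hw⟩
  have hp2 : ¬ (2:ℤ) ∣ (p:ℤ) := by rw [Nat.odd_iff] at hodd; omega
  have unit_norm : ∀ k : ℤ, ¬ (2:ℤ) ∣ k → ‖(k : ℚ_[2])‖ = 1 := by
    intro k hk
    have h1 : ‖(k : ℚ_[2])‖ ≤ 1 := Padic.norm_int_le_one _
    have h2 : ¬ ‖(k : ℚ_[2])‖ < 1 := fun h => hk (Padic.norm_intCast_lt_one_iff.mp h)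
    linarith [lt_or_eq_of_le h1]
  have hpn : ‖(p : ℚ_[2])‖ = 1 := by
    have := unit_norm (p:ℤ) hp2; push_cast at this; exact this
  have hcn : ‖(c : ℚ_[2])‖ = 1 := unit_norm c (by rw [Int.odd_iff] at hc; omega)
  have h2n : ‖(2 : ℚ_[2])‖ = 2⁻¹ := by
    have := @Padic.norm_p 2 ⟨Nat.prime_two⟩
    push_cast at this; exact_mod_cast this
  have h8 : (8 : ℚ_[2]) = 2 ^ 3 := by norm_num
  have h8n : ‖(8 : ℚ_[2])‖ = 8⁻¹ := by
    rw [h8, norm_pow, h2n]; norm_num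
  have han : ‖(a : ℚ_[2])‖ ≤ 4⁻¹ := by
    obtain ⟨a', rfl⟩ := ha
    push_cast
    rw [norm_mul]
    have h4 : (4 : ℚ_[2]) = 2 ^ 2 := by norm_num
    have h4n : ‖(4 : ℚ_[2])‖ = 4⁻¹ := by rw [h4, norm_pow, h2n]; norm_num
    rw [h4n]
    have := Padic.norm_int_le_one (p := 2) a'
    nlinarith [norm_nonneg ((a' : ℚ_[2]))]
  by_cases hz : ‖z‖ ≤ 1
  · -- z is a 2-adic integer; reduce mod 8
    have hw1 : ‖w‖ ≤ 1 := by
      have hL : ‖(p : ℚ_[2]) * w ^ 2‖ = ‖w‖ ^ 2 := by rw [norm_mul, norm_pow, hpn, one_mul]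
      have hR : ‖(p : ℚ_[2]) ^ 2 + 2 * (p : ℚ_[2]) * (a : ℚ_[2]) * z ^ 2 + 8 * (c : ℚ_[2]) * z ^ 4‖ ≤ 1 := by
        refine le_trans (Padic.nonarchimedean _ _) (max_le (le_trans (Padic.nonarchimedean _ _) (max_le ?_ ?_)) ?_)
        · rw [norm_pow, hpn]; norm_num
        · rw [norm_mul, norm_mul, norm_mul, norm_pow, h2n, hpn]
          nlinarith [norm_nonneg z, norm_nonneg ((a : ℚ_[2])), han, pow_le_one₀ (norm_nonneg z) hz (n := 2)]
        · rw [norm_mul, norm_mul, norm_pow, h8n, hcn]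
          nlinarith [norm_nonneg z, pow_le_one₀ (norm_nonneg z) hz (n := 4)]
      rw [hw, hL] at *
      nlinarith [norm_nonneg w, hR, hw]
    set W : ℤ_[2] := ⟨w, hw1⟩ with hW
    set Z : ℤ_[2] := ⟨z, hz⟩ with hZ
    have key : (p : ℤ_[2]) * W ^ 2 =
        (p : ℤ_[2]) ^ 2 + 2 * (p : ℤ_[2]) * (a : ℤ_[2]) * Z ^ 2 + 8 * (c : ℤ_[2]) * Z ^ 4 := by
      apply Subtype.ext
      push_cast
      exact hw
    have key8 := congrArg (PadicInt.toZModPow (p := 2) 3) key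
    simp only [map_mul, map_add, map_pow, map_natCast, map_intCast, map_ofNat] at key8
    have hA : (2 : ZMod (2^3)) * (a : ZMod (2^3)) = 0 := by
      obtain ⟨a', rfl⟩ := ha
      have : ((8 * a' : ℤ) : ZMod (2^3)) = 0 := by
        rw [ZMod.intCast_zmod_eq_zero_iff_dvd]
        exact ⟨a', by push_cast; ring⟩
      push_cast at this ⊢
      linear_combination this
    have h80 : (8 : ZMod (2^3)) = 0 := by decide
    have key8' : (p : ZMod (2^3)) * (PadicInt.toZModPow 3 W) ^ 2 = (p : ZMod (2^3)) ^ 2 := by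
      rw [key8]
      linear_combination ((p : ZMod (2^3)) * (PadicInt.toZModPow 3 Z) ^ 2) * hA
        + ((c : ZMod (2^3)) * (PadicInt.toZModPow 3 Z) ^ 4) * h80
    have hp8 : p % 8 = 3 ∨ p % 8 = 5 ∨ p % 8 = 7 := by rw [Nat.odd_iff] at hodd; omega
    have hcast : (p : ZMod (2^3)) = ((p % 8 : ℕ) : ZMod (2^3)) := by
      conv_lhs => rw [← Nat.mod_add_div p 8]
      push_cast
      rw [h80]; ring
    have contra : ∀ x q : ZMod (2^3), (q = 3 ∨ q = 5 ∨ q = 7) → q * x ^ 2 ≠ q ^ 2 := by decide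
    refine contra (PadicInt.toZModPow 3 W) (p : ZMod (2^3)) ?_ key8'
    rw [hcast]
    rcases hp8 with h | h | h <;> rw [h] <;> simp
  · -- z has negative valuation: parity contradiction
    push_neg at hz
    have hz0 : z ≠ 0 := by intro h; rw [h, norm_zero] at hz; linarith
    have hznorm : ‖z‖ = (2:ℝ) ^ (-z.valuation) := by
      have := Padic.norm_eq_zpow_neg_valuation hz0; push_cast at this; exact this
    have hm : -z.valuation ≥ 1 := by
      by_contra h
      push_neg at h
      have : ‖z‖ ≤ 1 := by
        rw [hznorm]
        calc (2:ℝ) ^ (-z.valuation) ≤ (2:ℝ) ^ (0:ℤ) :=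
          zpow_le_zpow_right₀ (by norm_num) (by omega)
        _ = 1 := zpow_zero 2
      linarith
    have hz2 : (2:ℝ) ≤ ‖z‖ := by
      rw [hznorm]
      calc (2:ℝ) = (2:ℝ) ^ (1:ℤ) := (zpow_one 2).symm
      _ ≤ (2:ℝ) ^ (-z.valuation) := zpow_le_zpow_right₀ (by norm_num) hm
    -- norms of the three terms
    have hT3 : ‖8 * (c : ℚ_[2]) * z ^ 4‖ = 8⁻¹ * ‖z‖ ^ 4 := by
      rw [norm_mul, norm_mul, norm_pow, h8n, hcn]; ring
    have hT12 : ‖(p : ℚ_[2]) ^ 2 + 2 * (p : ℚ_[2]) * (a : ℚ_[2]) * z ^ 2‖ < 8⁻¹ * ‖z‖ ^ 4 := by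
      have hsq : (4:ℝ) ≤ ‖z‖ ^ 2 := by nlinarith
      have hq4 : ‖z‖ ^ 2 * 4 ≤ ‖z‖ ^ 4 := by nlinarith
      refine lt_of_le_of_lt (Padic.nonarchimedean _ _) (max_lt ?_ ?_)
      · rw [norm_pow, hpn]; nlinarith
      · rw [norm_mul, norm_mul, norm_mul, norm_pow, h2n, hpn]
        nlinarith [norm_nonneg ((a : ℚ_[2])), han, sq_nonneg ‖z‖]
    have hRHS : ‖(p : ℚ_[2]) ^ 2 + 2 * (p : ℚ_[2]) * (a : ℚ_[2]) * z ^ 2 + 8 * (c : ℚ_[2]) * z ^ 4‖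
        = 8⁻¹ * ‖z‖ ^ 4 := by
      rw [Padic.add_eq_max_of_ne (ne_of_lt (hT12.trans_eq hT3.symm)), hT3,
        max_eq_right hT12.le]
    have hw0 : w ≠ 0 := by
      intro h
      rw [h] at hw
      rw [← hw] at hRHS
      simp only [norm_mul, norm_pow, hpn, one_mul, norm_zero] at hRHS
      norm_num at hRHS
      exact hz0 hRHS
    have hwnorm : ‖w‖ = (2:ℝ) ^ (-w.valuation) := by
      have := Padic.norm_eq_zpow_neg_valuation hw0; push_cast at this; exact this
    have hmain : (2:ℝ) ^ (-w.valuation * 2) = (2:ℝ) ^ (-z.valuation * 4 - 3) := by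
      have hL : ‖(p : ℚ_[2]) * w ^ 2‖ = (2:ℝ) ^ (-w.valuation * 2) := by
        rw [norm_mul, norm_pow, hpn, one_mul, hwnorm, ← zpow_natCast ((2:ℝ) ^ (-w.valuation)), ← zpow_mul]
        norm_num
      have hR : 8⁻¹ * ‖z‖ ^ 4 = (2:ℝ) ^ (-z.valuation * 4 - 3) := by
        rw [hznorm, ← zpow_natCast ((2:ℝ) ^ (-z.valuation)), ← zpow_mul]
        rw [zpow_sub₀ (by norm_num)]
        norm_num
        ring
      rw [← hL, hw, hRHS, hR]
    have := zpow_right_injective₀ (a := (2:ℝ)) (by norm_num) (by norm_num) hmain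
    omega
end

section
/- Let p be an odd prime, k ≥ 2 an integer, and α an integer with α² = 2^k − p. Then there are no odd integers W, z satisfying 2W² = 1 − 2α·z² − p·z⁴. -/
/-! Completing the square turns the equation into `2W² + (α² + p) z⁴ = (α z² - 1)²`. Since
`α² + p = 2^k` is divisible by `4` and `W` is odd, the square `(α z² - 1)²` would be `≡ 2 mod 4`,
which no square is. -/

theorem sq_ne_two_mul_sq_add_four_mul (x W t : ℤ) (hW : Odd W) : x ^ 2 ≠ 2 * W ^ 2 + 4 * t := by
  intro h
  have hx : Even x := (Int.even_pow.mp ⟨W ^ 2 + 2 * t, by rw [h]; ring⟩).1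
  obtain ⟨y, rfl⟩ := hx
  have hW2 : Even (W ^ 2) := ⟨y ^ 2 - t, by linarith⟩
  exact Int.not_even_iff_odd.mpr hW (Int.even_pow.mp hW2).1

theorem stmt_16_general (p : ℕ) (k : ℕ) (hk : 2 ≤ k)
    (α : ℤ) (hα : α ^ 2 = 2 ^ k - (p : ℤ)) :
    ¬ ∃ W z : ℤ, Odd W ∧ Odd z ∧
      2 * W ^ 2 = 1 - 2 * α * z ^ 2 - (p : ℤ) * z ^ 4 := by
  rintro ⟨W, z, hW, -, h⟩
  obtain ⟨t, ht⟩ : (4 : ℤ) ∣ α ^ 2 + p := by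
    rw [hα, sub_add_cancel]
    exact pow_dvd_pow 2 hk
  exact sq_ne_two_mul_sq_add_four_mul (α * z ^ 2 - 1) W (t * z ^ 4) hW
    (by linear_combination -h + z ^ 4 * ht)

theorem stmt_16 (p : ℕ) (hp : p.Prime) (hodd : Odd p) (k : ℕ) (hk : 2 ≤ k)
    (α : ℤ) (hα : α ^ 2 = 2 ^ k - (p : ℤ)) :
    ¬ ∃ W z : ℤ, Odd W ∧ Odd z ∧
      2 * W ^ 2 = 1 - 2 * α * z ^ 2 - (p : ℤ) * z ^ 4 :=
  stmt_16_general p k hk α hα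
end
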